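/- Policy-gradient formula (Lemma 1, single-block deterministic core): let θ be a stable gain, let U be a neighborhood of θ in ℝ^{d_u×d_x}, and let N : U → ℝ^{d_x×d_x} be a map that is differentiable at θ and satisfies N(θ′) = Q + θ′ᵀRθ′ + γ C_{θ′}ᵀ N(θ′) C_{θ′} for every θ′ ∈ U. Then the function θ′ ↦ (1−γ) tr( N(θ′) Σ₁ ) is differentiable at θ and its derivative in any direction H ∈ ℝ^{d_u×d_x} equals 2 tr( Hᵀ E_θ Σ_θ ); equivalently, its gradient is the matrix 2 E_θ Σ_θ. -/

import Mathlib

/-!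
Differentiating the Lyapunov identity `N = Q + θᵀRθ + γ CᵀNC` at `θ` in a direction `H` shows
that `D := dN(θ)[H]` solves the Lyapunov equation `D = (K + Kᵀ) + γ Cᵀ D C` with source
`K = Hᵀ E_θ` (this uses the symmetry of `R` and `N(θ)`). Stability makes `X ↦ W + γ CᵀXC` a
contraction in the sense that `γᵗ‖Cᵗ‖²` is summable, so that solution is the series
`∑ γᵗ (Cᵀ)ᵗ (K + Kᵀ) Cᵗ`. Moving the series across the trace turns `(1-γ) tr(D Σ₁)` into
`tr((K + Kᵀ) Σ_θ)`, which is `2 tr(K Σ_θ)` because `Σ_θ` is symmetric.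
-/

open Matrix
open scoped Matrix.Norms.L2Operator

noncomputable section

/-- The closed-loop matrix `C_θ = A - B θ`. -/
def Cl {dx du : ℕ} (A : Matrix (Fin dx) (Fin dx) ℝ) (B : Matrix (Fin dx) (Fin du) ℝ)
    (θ : Matrix (Fin du) (Fin dx) ℝ) : Matrix (Fin dx) (Fin dx) ℝ :=
  A - B * θ

/-- A closed-loop matrix `C` is stable (for discount factor `γ`) if
`‖C^t‖ ≤ c rᵗ γ^{-t/2}` (L2 operator norm) for some `c > 0` and `r ∈ (0,1)`. -/
def IsStable (γ : ℝ) {dx : ℕ} (C : Matrix (Fin dx) (Fin dx) ℝ) : Prop :=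
  ∃ c > (0:ℝ), ∃ r ∈ Set.Ioo (0:ℝ) 1, ∀ t : ℕ, ‖C ^ t‖ ≤ c * r ^ t * γ ^ (-(t : ℝ) / 2)

/-- `M(θ) := ∑_{t=0}^∞ γᵗ (C_θᵀ)ᵗ (Q + θᵀ R θ) C_θᵗ`. -/
def Mmat {dx du : ℕ} (γ : ℝ) (A : Matrix (Fin dx) (Fin dx) ℝ) (B : Matrix (Fin dx) (Fin du) ℝ)
    (Q : Matrix (Fin dx) (Fin dx) ℝ) (R : Matrix (Fin du) (Fin du) ℝ)
    (θ : Matrix (Fin du) (Fin dx) ℝ) : Matrix (Fin dx) (Fin dx) ℝ :=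
  ∑' t : ℕ, γ ^ t • ((Cl A B θ)ᵀ ^ t * (Q + θᵀ * R * θ) * Cl A B θ ^ t)

/-- `Σ_θ := (1-γ) ∑_{t=0}^∞ γᵗ C_θᵗ Σ₁ (C_θᵀ)ᵗ`. -/
def SigMat {dx du : ℕ} (γ : ℝ) (A : Matrix (Fin dx) (Fin dx) ℝ) (B : Matrix (Fin dx) (Fin du) ℝ)
    (S1 : Matrix (Fin dx) (Fin dx) ℝ) (θ : Matrix (Fin du) (Fin dx) ℝ) :
    Matrix (Fin dx) (Fin dx) ℝ :=
  (1 - γ) • ∑' t : ℕ, γ ^ t • (Cl A B θ ^ t * S1 * (Cl A B θ)ᵀ ^ t)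

/-- `E_θ := (R + γ Bᵀ M(θ) B) θ - γ Bᵀ M(θ) A`. -/
def Emat {dx du : ℕ} (γ : ℝ) (A : Matrix (Fin dx) (Fin dx) ℝ) (B : Matrix (Fin dx) (Fin du) ℝ)
    (Q : Matrix (Fin dx) (Fin dx) ℝ) (R : Matrix (Fin du) (Fin du) ℝ)
    (θ : Matrix (Fin du) (Fin dx) ℝ) : Matrix (Fin du) (Fin dx) ℝ :=
  (R + γ • (Bᵀ * Mmat γ A B Q R θ * B)) * θ - γ • (Bᵀ * Mmat γ A B Q R θ * A)

/-- `J(θ) := (1-γ) tr(M(θ) Σ₁)`. -/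
def Jcost {dx du : ℕ} (γ : ℝ) (A : Matrix (Fin dx) (Fin dx) ℝ) (B : Matrix (Fin dx) (Fin du) ℝ)
    (Q : Matrix (Fin dx) (Fin dx) ℝ) (R : Matrix (Fin du) (Fin du) ℝ)
    (S1 : Matrix (Fin dx) (Fin dx) ℝ) (θ : Matrix (Fin du) (Fin dx) ℝ) : ℝ :=
  (1 - γ) * (Mmat γ A B Q R θ * S1).trace

/-- The smallest singular value of a square matrix, as the infimum of `‖Ax‖` over unit vectors. -/
def sigmaMin {m : Type*} [Fintype m] [DecidableEq m] (A : Matrix m m ℝ) : ℝ :=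
  ⨅ x : {x : EuclideanSpace ℝ m // ‖x‖ = 1}, ‖Matrix.toEuclideanLin A x.1‖

/-- The Frobenius norm of a matrix. -/
def frobNorm {m n : Type*} [Fintype m] [Fintype n] (A : Matrix m n ℝ) : ℝ :=
  Real.sqrt (∑ i, ∑ j, A i j ^ 2)

theorem Matrix.l2_opNorm_transpose {m n : Type*} [Fintype m] [Fintype n] [DecidableEq m]
    [DecidableEq n] (X : Matrix m n ℝ) : ‖Xᵀ‖ = ‖X‖ := by
  rw [← conjTranspose_eq_transpose_of_trivial, l2_opNorm_conjTranspose]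

theorem IsStable.summable_pow_mul_norm_pow_sq {γ : ℝ} (hγ : 0 < γ) {d : ℕ}
    {C : Matrix (Fin d) (Fin d) ℝ} (hC : IsStable γ C) :
    Summable fun t : ℕ => γ ^ t * ‖C ^ t‖ ^ 2 := by
  obtain ⟨c, -, r, ⟨hr0, hr1⟩, hbound⟩ := hC
  refine Summable.of_nonneg_of_le (fun t => by positivity) (fun t => ?_)
    ((summable_geometric_of_lt_one (sq_nonneg r) (by nlinarith)).mul_left (c ^ 2))
  have hcancel : γ ^ t * (γ ^ (-(t : ℝ) / 2)) ^ 2 = 1 := by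
    rw [← Real.rpow_natCast, ← Real.rpow_natCast, ← Real.rpow_mul hγ.le, ← Real.rpow_add hγ]
    norm_num
  calc γ ^ t * ‖C ^ t‖ ^ 2 ≤ γ ^ t * (c * r ^ t * γ ^ (-(t : ℝ) / 2)) ^ 2 := by
        gcongr
        exact hbound t
    _ = c ^ 2 * (r ^ 2) ^ t * (γ ^ t * (γ ^ (-(t : ℝ) / 2)) ^ 2) := by ring
    _ = c ^ 2 * (r ^ 2) ^ t := by rw [hcancel, mul_one]

section Lyapunov

variable {n : Type*} [Fintype n] [DecidableEq n] {γ : ℝ} {C : Matrix n n ℝ}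

def lyapunovSum (γ : ℝ) (C W : Matrix n n ℝ) : Matrix n n ℝ :=
  ∑' t : ℕ, γ ^ t • (Cᵀ ^ t * W * C ^ t)

theorem norm_smul_transpose_pow_mul_mul_pow_le (hγ : 0 ≤ γ) (W : Matrix n n ℝ) (t : ℕ) :
    ‖γ ^ t • (Cᵀ ^ t * W * C ^ t)‖ ≤ ‖W‖ * (γ ^ t * ‖C ^ t‖ ^ 2) :=
  calc ‖γ ^ t • (Cᵀ ^ t * W * C ^ t)‖ ≤ γ ^ t * (‖Cᵀ ^ t‖ * ‖W‖ * ‖C ^ t‖) := by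
        rw [norm_smul, Real.norm_of_nonneg (by positivity)]
        gcongr
        exact (l2_opNorm_mul _ _).trans (by gcongr; exact l2_opNorm_mul _ _)
    _ = ‖W‖ * (γ ^ t * ‖C ^ t‖ ^ 2) := by
        rw [← transpose_pow, l2_opNorm_transpose]; ring

theorem eq_smul_transpose_pow_mul_mul_pow {D : Matrix n n ℝ} (hD : D = γ • (Cᵀ * D * C))
    (t : ℕ) :
    D = γ ^ t • (Cᵀ ^ t * D * C ^ t) := by
  induction t with
  | zero => simp
  | succ t ih =>
    conv_lhs => rw [hD, ih]
    rw [pow_succ, pow_succ', pow_succ, mul_smul_comm, smul_mul_assoc, smul_smul, mul_comm]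
    simp only [Matrix.mul_assoc]

variable (hγ : 0 ≤ γ) (hC : Summable fun t : ℕ => γ ^ t * ‖C ^ t‖ ^ 2)
include hγ hC

theorem summable_lyapunovSum (W : Matrix n n ℝ) :
    Summable fun t : ℕ => γ ^ t • (Cᵀ ^ t * W * C ^ t) :=
  Summable.of_norm_bounded (hC.mul_left ‖W‖) (norm_smul_transpose_pow_mul_mul_pow_le hγ W)

omit hγ in
theorem summable_pow_mul_norm_transpose_pow_sq :
    Summable fun t : ℕ => γ ^ t * ‖Cᵀ ^ t‖ ^ 2 := by
  simpa only [← transpose_pow, l2_opNorm_transpose] using hC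

theorem lyapunovSum_eq_add (W : Matrix n n ℝ) :
    lyapunovSum γ C W = W + γ • (Cᵀ * lyapunovSum γ C W * C) := by
  have hsum := summable_lyapunovSum hγ hC W
  have hshift : γ • (Cᵀ * lyapunovSum γ C W * C)
      = ∑' t : ℕ, γ ^ (t + 1) • (Cᵀ ^ (t + 1) * W * C ^ (t + 1)) := by
    rw [lyapunovSum, ← hsum.tsum_mul_left Cᵀ, ← (hsum.mul_left Cᵀ).tsum_mul_right C,
      ← ((hsum.mul_left Cᵀ).mul_right C).tsum_const_smul γ]
    refine tsum_congr fun t => ?_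
    rw [pow_succ', pow_succ', pow_succ, mul_smul_comm, smul_mul_assoc, smul_smul]
    simp only [Matrix.mul_assoc]
  rw [hshift, lyapunovSum, hsum.tsum_eq_zero_add]
  simp

theorem eq_lyapunovSum_of_eq_add {W X : Matrix n n ℝ} (hX : X = W + γ • (Cᵀ * X * C)) :
    X = lyapunovSum γ C W := by
  set S := lyapunovSum γ C W
  have hD : X - S = γ • (Cᵀ * (X - S) * C) :=
    calc X - S = (W + γ • (Cᵀ * X * C)) - (W + γ • (Cᵀ * S * C)) := by
          rw [← hX, ← lyapunovSum_eq_add hγ hC W]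
      _ = γ • (Cᵀ * (X - S) * C) := by
          rw [Matrix.mul_sub, Matrix.sub_mul, smul_sub, add_sub_add_left_eq_sub]
  -- the difference is reproduced by `t` steps of the contraction, whose size tends to `0`
  have hle (t : ℕ) : ‖X - S‖ ≤ ‖X - S‖ * (γ ^ t * ‖C ^ t‖ ^ 2) :=
    (congrArg norm (eq_smul_transpose_pow_mul_mul_pow hD t)).trans_le
      (norm_smul_transpose_pow_mul_mul_pow_le hγ _ t)
  have hlim := hC.tendsto_atTop_zero.const_mul ‖X - S‖
  rw [mul_zero] at hlim
  exact sub_eq_zero.mp (norm_le_zero_iff.mp (ge_of_tendsto' hlim hle))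

theorem lyapunovSum_transpose (W : Matrix n n ℝ) :
    (lyapunovSum γ C W)ᵀ = lyapunovSum γ C Wᵀ := by
  refine eq_lyapunovSum_of_eq_add hγ hC ?_
  conv_lhs => rw [lyapunovSum_eq_add hγ hC W]
  simp only [transpose_add, transpose_smul, transpose_mul, transpose_transpose, Matrix.mul_assoc]

theorem trace_lyapunovSum_mul (W S : Matrix n n ℝ) :
    (lyapunovSum γ C W * S).trace = (W * lyapunovSum γ Cᵀ S).trace := by
  have hsum := summable_lyapunovSum hγ hC W
  have hsumT := summable_lyapunovSum hγ (summable_pow_mul_norm_transpose_pow_sq hC) S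
  have htrace : Continuous (traceAddMonoidHom n ℝ) := continuous_id.matrix_trace
  rw [lyapunovSum, lyapunovSum, ← hsum.tsum_mul_right S, ← hsumT.tsum_mul_left W,
    ← traceAddMonoidHom_apply, ← traceAddMonoidHom_apply,
    (hsum.mul_right S).map_tsum _ htrace, (hsumT.mul_left W).map_tsum _ htrace]
  refine tsum_congr fun t => ?_
  simp only [traceAddMonoidHom_apply, smul_mul_assoc, mul_smul_comm, trace_smul,
    transpose_transpose]
  rw [Matrix.mul_assoc, Matrix.mul_assoc, trace_mul_comm, Matrix.mul_assoc, Matrix.mul_assoc]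

end Lyapunov

section Derivative

variable {l m n : Type*} [Fintype l] [Fintype m] [Fintype n]
  [DecidableEq m] [DecidableEq n] {x : ℝ}

theorem HasDerivAt.matrix_mul {f : ℝ → Matrix l m ℝ} {g : ℝ → Matrix m n ℝ}
    {f' : Matrix l m ℝ} {g' : Matrix m n ℝ} (hf : HasDerivAt f f' x) (hg : HasDerivAt g g' x) :
    HasDerivAt (fun y => f y * g y) (f' * g x + f x * g') x := by
  have hmul := ((mulLinearMap ℝ).mkContinuous₂ 1 fun (X : Matrix l m ℝ) (Y : Matrix m n ℝ) => by
    simpa using l2_opNorm_mul X Y).hasDerivAt_of_bilinear (fun _ => hf) (fun _ => hg)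
  simpa [add_comm] using hmul

theorem HasDerivAt.matrix_transpose {f : ℝ → Matrix m n ℝ} {f' : Matrix m n ℝ}
    (hf : HasDerivAt f f' x) : HasDerivAt (fun y => (f y)ᵀ) f'ᵀ x :=
  (transposeLinearEquiv m n ℝ ℝ).toLinearMap.toContinuousLinearMap.hasFDerivAt.comp_hasDerivAt
    x hf

open Filter Topology in
theorem HasFDerivAt.apply_eq_of_lyapunov {γ : ℝ} {A Q : Matrix n n ℝ} {B : Matrix n m ℝ}
    {R : Matrix m m ℝ} {θ : Matrix m n ℝ} {U : Set (Matrix m n ℝ)}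
    {N : Matrix m n ℝ → Matrix n n ℝ} {D : Matrix m n ℝ →L[ℝ] Matrix n n ℝ}
    (hD : HasFDerivAt N D θ) (hU : U ∈ 𝓝 θ)
    (hN : ∀ θ' ∈ U, N θ' = Q + θ'ᵀ * R * θ' + γ • ((A - B * θ')ᵀ * N θ' * (A - B * θ')))
    (H : Matrix m n ℝ) :
    D H = Hᵀ * R * θ + θᵀ * R * H
        - γ • ((B * H)ᵀ * N θ * (A - B * θ) + (A - B * θ)ᵀ * N θ * (B * H))
        + γ • ((A - B * θ)ᵀ * D H * (A - B * θ)) := by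
  set ℓ : ℝ → Matrix m n ℝ := fun s => θ + s • H
  have hℓ0 : ℓ 0 = θ := by simp [ℓ]
  have hℓ : HasDerivAt ℓ H 0 := by
    simpa [ℓ] using ((hasDerivAt_id (0 : ℝ)).smul_const H).const_add θ
  have hNℓ : HasDerivAt (fun s => N (ℓ s)) (D H) 0 := hD.comp_hasDerivAt_of_eq 0 hℓ hℓ0.symm
  have hCℓ : HasDerivAt (fun s => A - B * ℓ s) (-(B * H)) 0 := by
    simpa using ((hasDerivAt_const (0 : ℝ) B).matrix_mul hℓ).const_sub A
  have hrhs :=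
    (((hℓ.matrix_transpose.matrix_mul (hasDerivAt_const 0 R)).matrix_mul hℓ).const_add Q).add
      (((hCℓ.matrix_transpose.matrix_mul hNℓ).matrix_mul hCℓ).const_smul γ)
  have hlyap : (fun s => N (ℓ s)) =ᶠ[𝓝 0] fun s =>
      Q + (ℓ s)ᵀ * R * ℓ s + γ • ((A - B * ℓ s)ᵀ * N (ℓ s) * (A - B * ℓ s)) :=
    eventually_of_mem (hℓ.continuousAt.preimage_mem_nhds (hℓ0 ▸ hU)) fun s hs => hN _ hs
  conv_lhs => rw [hNℓ.unique (hrhs.congr_of_eventuallyEq hlyap), hℓ0]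
  simp only [transpose_neg, Matrix.neg_mul, Matrix.mul_neg, Matrix.mul_zero, add_zero,
    Matrix.add_mul, smul_add, smul_neg]
  abel

end Derivative

theorem Matrix.trace_add_transpose_mul {n R : Type*} [Fintype n] [CommSemiring R]
    (K : Matrix n n R) {S : Matrix n n R} (hS : Sᵀ = S) :
    ((K + Kᵀ) * S).trace = 2 * (K * S).trace := by
  conv_lhs => rw [Matrix.add_mul, trace_add, ← hS, trace_transpose_mul, hS]
  rw [two_mul]

section LQR

variable {dx du : ℕ} {γ : ℝ} {A : Matrix (Fin dx) (Fin dx) ℝ} {B : Matrix (Fin dx) (Fin du) ℝ}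
  {Q : Matrix (Fin dx) (Fin dx) ℝ} {R : Matrix (Fin du) (Fin du) ℝ} {θ : Matrix (Fin du) (Fin dx) ℝ}

theorem Emat_eq_sub : Emat γ A B Q R θ = R * θ - γ • (Bᵀ * Mmat γ A B Q R θ * Cl A B θ) := by
  rw [Emat, Cl]
  simp only [Matrix.mul_sub, Matrix.add_mul, Matrix.smul_mul, smul_sub, Matrix.mul_assoc]
  abel

theorem SigMat_eq_smul_lyapunovSum (S1 : Matrix (Fin dx) (Fin dx) ℝ) :
    SigMat γ A B S1 θ = (1 - γ) • lyapunovSum γ (Cl A B θ)ᵀ S1 := rfl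

variable (hγ : 0 ≤ γ) (hθ : Summable fun t : ℕ => γ ^ t * ‖Cl A B θ ^ t‖ ^ 2)
include hγ hθ

theorem transpose_Mmat (hQ : Qᵀ = Q) (hR : Rᵀ = R) :
    (Mmat γ A B Q R θ)ᵀ = Mmat γ A B Q R θ := by
  rw [Mmat, ← lyapunovSum, lyapunovSum_transpose hγ hθ]
  simp only [transpose_add, transpose_mul, hQ, hR, transpose_transpose, Matrix.mul_assoc]

theorem transpose_SigMat {S1 : Matrix (Fin dx) (Fin dx) ℝ} (hS1 : S1ᵀ = S1) :
    (SigMat γ A B S1 θ)ᵀ = SigMat γ A B S1 θ := by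
  rw [SigMat_eq_smul_lyapunovSum, transpose_smul,
    lyapunovSum_transpose hγ (summable_pow_mul_norm_transpose_pow_sq hθ), hS1]

theorem HasFDerivAt.apply_eq_lyapunovSum (hQ : Qᵀ = Q) (hR : Rᵀ = R)
    {U : Set (Matrix (Fin du) (Fin dx) ℝ)}
    {N : Matrix (Fin du) (Fin dx) ℝ → Matrix (Fin dx) (Fin dx) ℝ}
    {D : Matrix (Fin du) (Fin dx) ℝ →L[ℝ] Matrix (Fin dx) (Fin dx) ℝ}
    (hD : HasFDerivAt N D θ) (hU : U ∈ nhds θ)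
    (hN : ∀ θ' ∈ U, N θ' = Q + θ'ᵀ * R * θ' + γ • ((Cl A B θ')ᵀ * N θ' * Cl A B θ'))
    (H : Matrix (Fin du) (Fin dx) ℝ) :
    D H = lyapunovSum γ (Cl A B θ) (Hᵀ * Emat γ A B Q R θ + (Hᵀ * Emat γ A B Q R θ)ᵀ) := by
  have hNθ : N θ = Mmat γ A B Q R θ := eq_lyapunovSum_of_eq_add hγ hθ (hN θ (mem_of_mem_nhds hU))
  have hNθ_symm : (N θ)ᵀ = N θ := hNθ ▸ transpose_Mmat hγ hθ hQ hR
  refine eq_lyapunovSum_of_eq_add hγ hθ ((hD.apply_eq_of_lyapunov hU hN H).trans ?_)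
  congr 1
  simp only [Emat_eq_sub, ← hNθ, Cl, transpose_mul, transpose_sub, transpose_smul, hR,
    hNθ_symm, transpose_transpose]
  simp only [Matrix.mul_sub, Matrix.sub_mul, Matrix.mul_smul, Matrix.smul_mul, smul_add,
    Matrix.mul_assoc]
  abel

end LQR

/-- Policy-gradient formula (single-block deterministic core): if `θ` is
a stable gain, `U` a neighborhood of `θ`, and `N : U → ℝ^{d_x×d_x}` is differentiable at
`θ` and satisfies the Lyapunov equation `N(θ′) = Q + θ′ᵀRθ′ + γ C_{θ′}ᵀ N(θ′) C_{θ′}` on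
`U`, then `θ′ ↦ (1−γ) tr(N(θ′) Σ₁)` is differentiable at `θ` with derivative
`H ↦ 2 tr(Hᵀ E_θ Σ_θ)`; i.e. its gradient is the matrix `2 E_θ Σ_θ`. -/
theorem policy_gradient_formula
    {dx du : ℕ} (γ : ℝ) (hγ : γ ∈ Set.Ioo (0:ℝ) 1)
    (A : Matrix (Fin dx) (Fin dx) ℝ) (B : Matrix (Fin dx) (Fin du) ℝ)
    (Q : Matrix (Fin dx) (Fin dx) ℝ) (R : Matrix (Fin du) (Fin du) ℝ)
    (S1 : Matrix (Fin dx) (Fin dx) ℝ)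
    (hQ : Qᵀ = Q) (hR : Rᵀ = R) (hS1 : S1.PosSemidef)
    (θ : Matrix (Fin du) (Fin dx) ℝ) (hθ : IsStable γ (Cl A B θ))
    (U : Set (Matrix (Fin du) (Fin dx) ℝ)) (hU : U ∈ nhds θ)
    (N : Matrix (Fin du) (Fin dx) ℝ → Matrix (Fin dx) (Fin dx) ℝ)
    (hNdiff : DifferentiableAt ℝ N θ)
    (hN : ∀ θ' ∈ U, N θ' = Q + θ'ᵀ * R * θ' + γ • ((Cl A B θ')ᵀ * N θ' * Cl A B θ')) :
    DifferentiableAt ℝ (fun θ' => (1 - γ) * (N θ' * S1).trace) θ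
    ∧ ∃ L : Matrix (Fin du) (Fin dx) ℝ →L[ℝ] ℝ,
        HasFDerivAt (fun θ' => (1 - γ) * (N θ' * S1).trace) L θ ∧
        ∀ H : Matrix (Fin du) (Fin dx) ℝ,
          L H = 2 * (Hᵀ * (Emat γ A B Q R θ * SigMat γ A B S1 θ)).trace := by
  obtain ⟨D, hD⟩ := hNdiff
  have hsum := hθ.summable_pow_mul_norm_pow_sq hγ.1
  have hS1_symm : S1ᵀ = S1 := (isHermitian_iff_isSymm.mp hS1.1).eq
  let T : Matrix (Fin dx) (Fin dx) ℝ →L[ℝ] ℝ :=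
    (traceLinearMap (Fin dx) ℝ ℝ ∘ₗ LinearMap.mulRight ℝ S1).toContinuousLinearMap
  have hJ := (T.hasFDerivAt.comp θ hD).const_mul (1 - γ)
  refine ⟨hJ.differentiableAt, _, hJ, fun H => ?_⟩
  set K := Hᵀ * Emat γ A B Q R θ
  calc (1 - γ) * (D H * S1).trace
      = (1 - γ) * (lyapunovSum γ (Cl A B θ) (K + Kᵀ) * S1).trace := by
        rw [hD.apply_eq_lyapunovSum hγ.1.le hsum hQ hR hU hN H]
    _ = ((K + Kᵀ) * SigMat γ A B S1 θ).trace := by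
        rw [trace_lyapunovSum_mul hγ.1.le hsum, SigMat_eq_smul_lyapunovSum, Matrix.mul_smul,
          trace_smul, smul_eq_mul]
    _ = 2 * (Hᵀ * (Emat γ A B Q R θ * SigMat γ A B S1 θ)).trace := by
        rw [trace_add_transpose_mul _ (transpose_SigMat hγ.1.le hsum hS1_symm), Matrix.mul_assoc]
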